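/- arXiv:1003.2280 — 4 statements merged into one kernel-verified Lean document; each statement's English description precedes it below -/
import Mathlib

section
/- There exist subspaces E^s, E^u of ℝ³ with dim E^s = 2, dim E^u = 1, A(E^s) = E^s, A(E^u) = E^u, E^s ∩ E^u = {0} and E^s + E^u = ℝ³, together with constants C ≥ 1 and ρ ∈ (0,1), such that for every n ≥ 0: ‖Aⁿ v‖ ≤ C ρⁿ ‖v‖ for all v ∈ E^s, and ‖A⁻ⁿ v‖ ≤ C ρⁿ ‖v‖ for all v ∈ E^u. -/
/-- The matrix with rows `(1,1,0)`, `(0,0,1)`, `(1,0,0)`, with real entries. -/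
def Areal : Matrix (Fin 3) (Fin 3) ℝ := !![1, 1, 0; 0, 0, 1; 1, 0, 0]

/-- The linear automorphism of Euclidean `ℝ³` given by the matrix `A`. -/
noncomputable def TA : EuclideanSpace ℝ (Fin 3) →ₗ[ℝ] EuclideanSpace ℝ (Fin 3) :=
  Matrix.toEuclideanLin Areal

/-!
The characteristic polynomial of `A` is `x³ - x² - 1`. It has a real root `t ∈ (1, 2)` and
factors as `(x - t) q(x)` with `q = x² + (t - 1) x + t⁻¹`, whose roots form a conjugate pair
`z, z̄` with `|z|² = t⁻¹ < 1`. The kernels `E^u = ker (A - t)` and `E^s = ker q(A)` of these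
coprime factors split `ℝ³`. Writing `z = a + b i`, every `w ∈ E^s` has an orbit
`Aⁿ w = Re (zⁿ) w + Im (zⁿ) y` with `y = (A w - a w) / b`, which contracts like `|z|ⁿ`;
on `E^u` the inverse `A⁻¹ = A² - A` acts as multiplication by `t⁻¹ ≤ |z|`.
-/

open Polynomial

section Contraction

variable {E : Type*} [NormedAddCommGroup E] [NormedSpace ℝ E]

theorem Module.End.pow_apply_eq_re_smul_add_im_smul (T : Module.End ℝ E) (z : ℂ) {w y : E}
    (hw : T w = z.re • w + z.im • y) (hy : T y = z.re • y - z.im • w) (n : ℕ) :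
    (T ^ n) w = (z ^ n).re • w + (z ^ n).im • y := by
  induction n with
  | zero => simp
  | succ n ih =>
    rw [pow_succ', Module.End.mul_apply, ih, map_add, map_smul, map_smul, hw, hy, pow_succ',
      Complex.mul_re, Complex.mul_im]
    module

theorem Module.End.norm_pow_apply_le_of_sq_eq (T : Module.End ℝ E) {a r : ℝ} (har : |a| < r)
    {w : E} (hw : T (T w) = (2 * a) • T w - r ^ 2 • w) (n : ℕ) :
    ‖(T ^ n) w‖ ≤ r ^ n * (‖w‖ + ‖T w - a • w‖ / √(r ^ 2 - a ^ 2)) := by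
  have hr : 0 ≤ r := (abs_nonneg a).trans har.le
  have hdisc : 0 < r ^ 2 - a ^ 2 := by nlinarith [sq_abs a, abs_nonneg a]
  set b := √(r ^ 2 - a ^ 2)
  have hb : 0 < b := Real.sqrt_pos.mpr hdisc
  have hb2 : b ^ 2 = r ^ 2 - a ^ 2 := Real.sq_sqrt hdisc.le
  obtain ⟨y, hy⟩ : ∃ y : E, b • y = T w - a • w := ⟨b⁻¹ • (T w - a • w), smul_inv_smul₀ hb.ne' _⟩
  have hTw : T w = a • w + b • y := by rw [hy]; abel
  have hTy : T y = a • y - b • w := by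
    apply smul_right_injective E hb.ne'
    dsimp only
    rw [← map_smul, hy, map_sub, hw, map_smul, hTw]
    match_scalars
    · linear_combination hb2
    · ring
  have hz : ‖(⟨a, b⟩ : ℂ) ^ n‖ = r ^ n := by
    rw [norm_pow, Complex.norm_def, Complex.normSq_mk, ← sq, ← sq, hb2, add_sub_cancel,
      Real.sqrt_sq hr]
  have hy_norm : ‖y‖ = ‖T w - a • w‖ / b := by
    rw [eq_div_iff hb.ne', ← hy, norm_smul, Real.norm_of_nonneg hb.le, mul_comm]
  rw [T.pow_apply_eq_re_smul_add_im_smul ⟨a, b⟩ hTw hTy n]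
  calc ‖((⟨a, b⟩ : ℂ) ^ n).re • w + ((⟨a, b⟩ : ℂ) ^ n).im • y‖
      ≤ |((⟨a, b⟩ : ℂ) ^ n).re| * ‖w‖ + |((⟨a, b⟩ : ℂ) ^ n).im| * ‖y‖ := by
        refine (norm_add_le _ _).trans_eq ?_
        rw [norm_smul, norm_smul, Real.norm_eq_abs, Real.norm_eq_abs]
    _ ≤ r ^ n * ‖w‖ + r ^ n * ‖y‖ := by
        gcongr
        · exact hz ▸ Complex.abs_re_le_norm _
        · exact hz ▸ Complex.abs_im_le_norm _
    _ = r ^ n * (‖w‖ + ‖T w - a • w‖ / b) := by rw [hy_norm]; ring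

theorem Module.End.exists_norm_pow_apply_le_of_sq_eq [FiniteDimensional ℝ E] (T : Module.End ℝ E)
    {a r : ℝ} (har : |a| < r) (s : Set E)
    (hs : ∀ w ∈ s, T (T w) = (2 * a) • T w - r ^ 2 • w) :
    ∃ C, 1 ≤ C ∧ ∀ n : ℕ, ∀ w ∈ s, ‖(T ^ n) w‖ ≤ C * r ^ n * ‖w‖ := by
  set K := ‖LinearMap.toContinuousLinearMap T‖
  refine ⟨1 + (K + |a|) / √(r ^ 2 - a ^ 2), by simp only [le_add_iff_nonneg_right]; positivity,
    fun n w hw => (T.norm_pow_apply_le_of_sq_eq har (hs w hw) n).trans ?_⟩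
  have hTw : ‖T w - a • w‖ ≤ (K + |a|) * ‖w‖ := calc
    ‖T w - a • w‖ ≤ ‖T w‖ + ‖a • w‖ := norm_sub_le _ _
    _ ≤ K * ‖w‖ + |a| * ‖w‖ := by
      rw [norm_smul, Real.norm_eq_abs]
      exact add_le_add_left ((LinearMap.toContinuousLinearMap T).le_opNorm w) _
    _ = (K + |a|) * ‖w‖ := by ring
  have hr : 0 ≤ r ^ n := pow_nonneg ((abs_nonneg a).trans har.le) n
  calc r ^ n * (‖w‖ + ‖T w - a • w‖ / √(r ^ 2 - a ^ 2))
      ≤ r ^ n * (‖w‖ + (K + |a|) * ‖w‖ / √(r ^ 2 - a ^ 2)) := by gcongr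
    _ = (1 + (K + |a|) / √(r ^ 2 - a ^ 2)) * r ^ n * ‖w‖ := by ring

end Contraction

theorem Module.End.pow_apply_eq_inv_pow_smul {K V : Type*} [Field K] [AddCommGroup V]
    [Module K V] {S T : Module.End K V} (hST : S * T = 1) {t : K} (ht : t ≠ 0) {v : V}
    (hv : T v = t • v) (n : ℕ) : (S ^ n) v = t⁻¹ ^ n • v := by
  have hSv : S v = t⁻¹ • v := calc
    S v = t⁻¹ • S (T v) := by rw [hv, map_smul, inv_smul_smul₀ ht]
    _ = t⁻¹ • v := by rw [← Module.End.mul_apply, hST, Module.End.one_apply]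
  induction n with
  | zero => simp
  | succ n ih => rw [pow_succ, Module.End.mul_apply, hSv, map_smul, ih, smul_smul, pow_succ']

theorem Submodule.map_eq_of_map_le_of_injective {K V : Type*} [DivisionRing K] [AddCommGroup V]
    [Module K V] [FiniteDimensional K V] {f : V →ₗ[K] V} (hf : Function.Injective f)
    {p : Submodule K V} (hp : p.map f ≤ p) : p.map f = p :=
  Submodule.eq_of_le_of_finrank_eq hp (p.equivMapOfInjective f hf).finrank_eq.symm

theorem Polynomial.map_ker_aeval_le {R M : Type*} [CommSemiring R] [AddCommMonoid M] [Module R M]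
    (f : Module.End R M) (p : R[X]) :
    (LinearMap.ker (aeval f p)).map f ≤ LinearMap.ker (aeval f p) := by
  rintro _ ⟨x, hx, rfl⟩
  have hcomm : aeval f p * f = f * aeval f p := by
    simpa only [aeval_X] using ((Commute.all p X).map (aeval f)).eq
  rw [LinearMap.mem_ker, ← Module.End.mul_apply, hcomm, Module.End.mul_apply,
    LinearMap.mem_ker.mp hx, map_zero]

theorem Polynomial.mem_ker_aeval_X_sub_C {R M : Type*} [CommRing R] [AddCommGroup M] [Module R M]
    {f : Module.End R M} {μ : R} {v : M} :
    v ∈ LinearMap.ker (aeval f (X - C μ)) ↔ f v = μ • v := by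
  simp only [LinearMap.mem_ker, map_sub, aeval_X, aeval_C, LinearMap.sub_apply,
    Module.algebraMap_end_apply, sub_eq_zero]

theorem exists_one_lt_lt_two_pow_three_eq_sq_add_one : ∃ t : ℝ, 1 < t ∧ t < 2 ∧ t ^ 3 = t ^ 2 + 1 := by
  obtain ⟨t, ⟨ht1, ht2⟩, ht⟩ : (0 : ℝ) ∈ (fun x : ℝ => x ^ 3 - x ^ 2 - 1) '' Set.Ioo 1 2 :=
    intermediate_value_Ioo (by norm_num) (by fun_prop) (by norm_num)
  exact ⟨t, ht1, ht2, by linear_combination ht⟩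

/-- For a root `t` of `x³ - x² - 1`, the cofactor of `x - t`. -/
noncomputable def stableFactor (t : ℝ) : ℝ[X] := X ^ 2 + C (t - 1) * X + C t⁻¹

theorem X_sub_C_mul_stableFactor {t : ℝ} (ht : t ^ 3 = t ^ 2 + 1) :
    (X - C t) * stableFactor t = X ^ 3 - X ^ 2 - 1 := by
  have ht0 : t ≠ 0 := by rintro rfl; norm_num at ht
  have hlin : t⁻¹ - t * (t - 1) = 0 := by field_simp; linear_combination -ht
  calc (X - C t) * stableFactor t
      = X ^ 3 - X ^ 2 + C (t⁻¹ - t * (t - 1)) * X - C (t * t⁻¹) := by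
        simp only [stableFactor, map_sub, map_mul, map_one]; ring
    _ = X ^ 3 - X ^ 2 - 1 := by rw [hlin, mul_inv_cancel₀ ht0, C_0, C_1]; ring

theorem isCoprime_X_sub_C_stableFactor {t : ℝ} (ht : 1 < t) :
    IsCoprime (X - C t) (stableFactor t) := by
  rw [(irreducible_X_sub_C t).coprime_iff_not_dvd, dvd_iff_isRoot]
  have hpos : 0 < eval t (stableFactor t) := by
    simp only [stableFactor, eval_add, eval_pow, eval_X, eval_mul, eval_C]
    have := inv_pos.mpr (zero_lt_one.trans ht)
    nlinarith
  exact hpos.ne'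

theorem apply_apply_of_mem_ker_aeval_stableFactor {M : Type*} [AddCommGroup M] [Module ℝ M]
    {f : Module.End ℝ M} {t : ℝ} {w : M} (hw : w ∈ LinearMap.ker (aeval f (stableFactor t))) :
    f (f w) = (1 - t) • f w - t⁻¹ • w := by
  have h := LinearMap.mem_ker.mp hw
  simp only [stableFactor, map_add, aeval_X, map_mul, aeval_C, map_sub, map_one,
    LinearMap.add_apply, Module.End.mul_apply, LinearMap.sub_apply, Module.algebraMap_end_apply,
    Module.End.one_apply, sq] at h
  linear_combination (norm := module) h

theorem abs_one_sub_div_two_lt_sqrt_inv {t : ℝ} (ht1 : 1 < t) (ht2 : t < 2) :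
    |(1 - t) / 2| < √t⁻¹ := by
  rw [Real.lt_sqrt (abs_nonneg _), sq_abs, ← one_div, lt_div_iff₀ (zero_lt_one.trans ht1)]
  nlinarith

section MatrixA

local notation "E3" => EuclideanSpace ℝ (Fin 3)

theorem TA_apply (w : E3) : TA w = !₂[w 0 + w 1, w 2, w 0] := by
  ext i
  fin_cases i <;> simp [TA, Areal, Matrix.toLpLin_apply, dotProduct, Fin.sum_univ_three]

theorem TA_pow_three : TA ^ 3 = TA ^ 2 + 1 := by
  ext w i
  fin_cases i <;> simp [pow_succ, TA_apply]

theorem aeval_TA_cubic : aeval TA (X ^ 3 - X ^ 2 - 1 : ℝ[X]) = 0 := by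
  simp [TA_pow_three]

/-- `A⁻¹ = A² - A`, read off from `A³ = A² + 1`. -/
noncomputable def TAinv : Module.End ℝ E3 := TA ^ 2 - TA

theorem TA_mul_TAinv : TA * TAinv = 1 := by
  rw [TAinv, mul_sub, ← pow_succ', ← sq, TA_pow_three, add_sub_cancel_left]

theorem TAinv_mul_TA : TAinv * TA = 1 := by
  rw [TAinv, sub_mul, ← pow_succ, ← sq, TA_pow_three, add_sub_cancel_left]

theorem TA_injective : Function.Injective TA :=
  Function.LeftInverse.injective (g := TAinv) fun w => by
    rw [← Module.End.mul_apply, TAinv_mul_TA, Module.End.one_apply]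

theorem TA_apply_eigenvector {t : ℝ} (ht : t ^ 3 = t ^ 2 + 1) :
    TA !₂[t ^ 2, 1, t] = t • !₂[t ^ 2, 1, t] := by
  ext i
  fin_cases i <;> simp only [TA_apply, Fin.isValue, Fin.zero_eta, Fin.mk_one, Fin.reduceFinMk, Matrix.cons_val_zero,
    Matrix.cons_val_one, Matrix.cons_val, PiLp.smul_apply, smul_eq_mul, mul_one]
  · linear_combination -ht
  · ring

theorem ker_aeval_TA_X_sub_C {t : ℝ} (ht : t ^ 3 = t ^ 2 + 1) :
    LinearMap.ker (aeval TA (X - C t)) = Submodule.span ℝ {!₂[t ^ 2, 1, t]} := by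
  ext w
  rw [mem_ker_aeval_X_sub_C, Submodule.mem_span_singleton]
  constructor
  · intro hw
    have h1 := congrArg (· 1) hw
    have h2 := congrArg (· 2) hw
    simp only [TA_apply, Fin.isValue, Matrix.cons_val_one, Matrix.cons_val_zero, Matrix.cons_val,
      PiLp.smul_apply, smul_eq_mul] at h1 h2
    refine ⟨w 1, ?_⟩
    ext i
    fin_cases i <;> simp only [Fin.isValue, Fin.zero_eta, Fin.mk_one, Fin.reduceFinMk, Matrix.cons_val_zero,
      Matrix.cons_val_one, Matrix.cons_val, PiLp.smul_apply, smul_eq_mul, mul_one]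
    · linear_combination -h2 - t * h1
    · linear_combination -h1
  · rintro ⟨c, rfl⟩
    rw [map_smul, TA_apply_eigenvector ht, smul_comm]

theorem finrank_ker_aeval_TA_X_sub_C {t : ℝ} (ht : t ^ 3 = t ^ 2 + 1) :
    Module.finrank ℝ (LinearMap.ker (aeval TA (X - C t))) = 1 := by
  rw [ker_aeval_TA_X_sub_C ht, finrank_span_singleton]
  intro h
  simpa using congrArg (· 1) h

theorem isCompl_ker_aeval_TA {t : ℝ} (ht1 : 1 < t) (ht : t ^ 3 = t ^ 2 + 1) :
    IsCompl (LinearMap.ker (aeval TA (stableFactor t))) (LinearMap.ker (aeval TA (X - C t))) := by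
  have hcop := isCoprime_X_sub_C_stableFactor ht1
  refine ⟨(disjoint_ker_aeval_of_isCoprime TA hcop).symm, codisjoint_iff.mpr ?_⟩
  rw [sup_comm, sup_ker_aeval_eq_ker_aeval_mul_of_coprime TA hcop, X_sub_C_mul_stableFactor ht,
    aeval_TA_cubic, LinearMap.ker_zero]

theorem finrank_ker_aeval_TA_stableFactor {t : ℝ} (ht1 : 1 < t) (ht : t ^ 3 = t ^ 2 + 1) :
    Module.finrank ℝ (LinearMap.ker (aeval TA (stableFactor t))) = 2 := by
  have h := Submodule.finrank_add_eq_of_isCompl (isCompl_ker_aeval_TA ht1 ht)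
  rw [finrank_ker_aeval_TA_X_sub_C ht, finrank_euclideanSpace_fin] at h
  omega

end MatrixA

/-- The hyperbolic splitting of `A`: there are subspaces `E^s`, `E^u` of `ℝ³` with
`dim E^s = 2`, `dim E^u = 1`, `A(E^s) = E^s`, `A(E^u) = E^u`, `E^s ∩ E^u = {0}`,
`E^s + E^u = ℝ³`, and constants `C ≥ 1`, `ρ ∈ (0,1)` such that for every `n ≥ 0`:
`‖Aⁿ v‖ ≤ C ρⁿ ‖v‖` for `v ∈ E^s` and `‖A⁻ⁿ v‖ ≤ C ρⁿ ‖v‖` for `v ∈ E^u`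
(the inverse `A⁻¹` being realized by a two-sided linear inverse `S` of `A`). -/
theorem anosov_hyperbolic_splitting :
    ∃ (Es Eu : Submodule ℝ (EuclideanSpace ℝ (Fin 3)))
      (S : EuclideanSpace ℝ (Fin 3) →ₗ[ℝ] EuclideanSpace ℝ (Fin 3)) (C ρ : ℝ),
      Module.finrank ℝ Es = 2 ∧ Module.finrank ℝ Eu = 1 ∧
      Es.map TA = Es ∧ Eu.map TA = Eu ∧
      Es ⊓ Eu = ⊥ ∧ Es ⊔ Eu = ⊤ ∧
      S ∘ₗ TA = LinearMap.id ∧ TA ∘ₗ S = LinearMap.id ∧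
      1 ≤ C ∧ 0 < ρ ∧ ρ < 1 ∧
      (∀ n : ℕ, ∀ v ∈ Es, ‖(TA ^ n) v‖ ≤ C * ρ ^ n * ‖v‖) ∧
      (∀ n : ℕ, ∀ v ∈ Eu, ‖(S ^ n) v‖ ≤ C * ρ ^ n * ‖v‖) := by
  obtain ⟨t, ht1, ht2, ht⟩ := exists_one_lt_lt_two_pow_three_eq_sq_add_one
  have ht0 : 0 < t := zero_lt_one.trans ht1
  have hcompl := isCompl_ker_aeval_TA ht1 ht
  have hρ : √t⁻¹ ^ 2 = t⁻¹ := Real.sq_sqrt (inv_nonneg.mpr ht0.le)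
  have hρ1 : √t⁻¹ < 1 :=
    (Real.sqrt_lt' one_pos).mpr (by rw [one_pow]; exact inv_lt_one_of_one_lt₀ ht1)
  obtain ⟨C, hC, hstable⟩ := Module.End.exists_norm_pow_apply_le_of_sq_eq TA
    (abs_one_sub_div_two_lt_sqrt_inv ht1 ht2) (LinearMap.ker (aeval TA (stableFactor t)))
    fun w hw => by
      rw [hρ, mul_div_cancel₀ _ two_ne_zero]
      exact apply_apply_of_mem_ker_aeval_stableFactor hw
  refine ⟨_, _, TAinv, C, √t⁻¹, finrank_ker_aeval_TA_stableFactor ht1 ht,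
    finrank_ker_aeval_TA_X_sub_C ht,
    Submodule.map_eq_of_map_le_of_injective TA_injective (map_ker_aeval_le _ _),
    Submodule.map_eq_of_map_le_of_injective TA_injective (map_ker_aeval_le _ _),
    hcompl.inf_eq_bot, hcompl.sup_eq_top, TAinv_mul_TA, TA_mul_TAinv, hC, by positivity, hρ1,
    hstable, fun n v hv => ?_⟩
  rw [Module.End.pow_apply_eq_inv_pow_smul TAinv_mul_TA ht0.ne' (mem_ker_aeval_X_sub_C.mp hv),
    norm_smul, norm_pow, Real.norm_of_nonneg (inv_nonneg.mpr ht0.le)]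
  have ht_inv_le : t⁻¹ ≤ √t⁻¹ :=
    hρ.symm.trans_le (pow_le_of_le_one (Real.sqrt_nonneg _) hρ1.le two_ne_zero)
  calc t⁻¹ ^ n * ‖v‖ ≤ 1 * √t⁻¹ ^ n * ‖v‖ := by rw [one_mul]; gcongr
    _ ≤ C * √t⁻¹ ^ n * ‖v‖ := by gcongr
end

section
/- The linear map A : ℝ³ → ℝ³ has exactly one real eigenvalue, namely the unique real root λ of X³ − X² − 1 (which satisfies λ > 1); moreover every one-dimensional subspace L of ℝ³ with A(L) = L is contained in the eigenspace of λ. In particular, the two-dimensional A-invariant stable subspace contains no A-invariant line. -/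
/-- The linear map `A : ℝ³ → ℝ³`. -/
def LA : (Fin 3 → ℝ) →ₗ[ℝ] (Fin 3 → ℝ) := Matrix.mulVecLin Areal

open Module Submodule LinearMap

section InvariantSubspaces

variable {K V : Type*} [Field K] [AddCommGroup V] [Module K V]

theorem Submodule.exists_hasEigenvalue_le_eigenspace_of_finrank_eq_one {L : Submodule K V}
    (hL : finrank K L = 1) {f : End K V} (hf : L.map f ≤ L) :
    ∃ c, f.HasEigenvalue c ∧ L ≤ f.eigenspace c := by
  obtain ⟨c, hc, -⟩ := LinearMap.existsUnique_eq_smul_id_of_finrank_eq_one hL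
    (f.restrict fun x hx => hf (mem_map_of_mem hx))
  have hLc : L ≤ f.eigenspace c := fun x hx => by
    simpa using congr(($hc ⟨x, hx⟩ : V))
  refine ⟨c, ?_, hLc⟩
  have hL0 : L ≠ ⊥ := fun h => by rw [h, finrank_bot] at hL; exact zero_ne_one hL
  exact End.hasEigenvalue_iff.2 (ne_bot_of_le_ne_bot hL0 hLc)

theorem Submodule.exists_hasEigenvalue_range_sub_le_of_finrank_add_one [FiniteDimensional K V]
    {W : Submodule K V} (hW : finrank K W + 1 = finrank K V) {f : End K V} (hf : W.map f ≤ W) :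
    ∃ c, f.HasEigenvalue c ∧ range (f - c • 1) ≤ W := by
  have hquot : finrank K (V ⧸ W) = 1 := by
    have := W.finrank_quotient_add_finrank
    omega
  obtain ⟨c, hc, -⟩ := LinearMap.existsUnique_eq_smul_id_of_finrank_eq_one hquot
    (W.mapQ W f (map_le_iff_le_comap.1 hf))
  have hrange : range (f - c • 1) ≤ W := by
    rintro _ ⟨x, rfl⟩
    rw [← Submodule.Quotient.mk_eq_zero]
    simpa [sub_eq_zero] using congr($hc (Submodule.Quotient.mk x))
  refine ⟨c, ?_, hrange⟩
  rw [End.hasEigenvalue_iff, End.eigenspace_def, Ne, ker_eq_bot_iff_range_eq_top, ← top_le_iff]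
  intro htop
  have := finrank_mono (htop.trans hrange)
  rw [finrank_top] at this
  omega

end InvariantSubspaces

theorem one_lt_of_cubic_eq_zero {lam : ℝ} (h : lam ^ 3 - lam ^ 2 - 1 = 0) : 1 < lam := by
  nlinarith [sq_nonneg lam]

theorem eq_of_cubic_eq_zero {lam μ : ℝ} (hlam : lam ^ 3 - lam ^ 2 - 1 = 0)
    (hμ : μ ^ 3 - μ ^ 2 - 1 = 0) : μ = lam := by
  have hlam1 := one_lt_of_cubic_eq_zero hlam
  have hμ1 := one_lt_of_cubic_eq_zero hμ
  have hfactor : (μ - lam) * (μ ^ 2 + μ * lam + lam ^ 2 - μ - lam) = 0 := by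
    linear_combination hμ - hlam
  have hpos : 0 < μ ^ 2 + μ * lam + lam ^ 2 - μ - lam := by nlinarith
  linarith [(mul_eq_zero.1 hfactor).resolve_right hpos.ne']

theorem LA_apply (x : Fin 3 → ℝ) : LA x = ![x 0 + x 1, x 2, x 0] := by
  ext i
  fin_cases i <;> simp [LA, Areal, Matrix.mulVec, dotProduct, Fin.sum_univ_three]

def rightEigvec (μ : ℝ) : Fin 3 → ℝ := ![μ ^ 2, 1, μ]

theorem rightEigvec_ne_zero (μ : ℝ) : rightEigvec μ ≠ 0 := fun h => by
  simpa [rightEigvec] using congr_fun h 1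

def leftEigvec (μ : ℝ) : Fin 3 → ℝ := ![μ ^ 2, μ, 1]

theorem LA_rightEigvec_eq_smul_iff (μ : ℝ) :
    LA (rightEigvec μ) = μ • rightEigvec μ ↔ μ ^ 3 - μ ^ 2 - 1 = 0 := by
  constructor
  · intro h
    have h0 : μ ^ 2 + 1 = μ * μ ^ 2 := by simpa [LA_apply, rightEigvec] using congr_fun h 0
    linear_combination -h0
  · intro h
    have h0 : μ ^ 2 + 1 = μ * μ ^ 2 := by linear_combination -h
    ext i
    fin_cases i <;> simp [LA_apply, rightEigvec, h0, ← sq]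

theorem eq_smul_rightEigvec_of_LA_eq_smul {v : Fin 3 → ℝ} {μ : ℝ} (h : LA v = μ • v) :
    v = v 1 • rightEigvec μ := by
  have h1 : v 2 = μ * v 1 := by simpa [LA_apply] using congr_fun h 1
  have h0 : v 0 = μ * v 2 := by simpa [LA_apply] using congr_fun h 2
  ext i
  fin_cases i <;> simp [rightEigvec, h0, h1, sq, mul_assoc, mul_comm]

theorem hasEigenvalue_LA_iff {μ : ℝ} : End.HasEigenvalue LA μ ↔ μ ^ 3 - μ ^ 2 - 1 = 0 := by
  rw [← LA_rightEigvec_eq_smul_iff]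
  constructor
  · intro hμ
    obtain ⟨v, hv, hv0⟩ := hμ.exists_hasEigenvector
    rw [End.mem_eigenspace_iff] at hv
    have hv' := eq_smul_rightEigvec_of_LA_eq_smul hv
    have hv1 : v 1 ≠ 0 := fun h => hv0 (by rw [hv', h, zero_smul])
    rw [hv', map_smul, smul_comm] at hv
    exact smul_right_injective _ hv1 hv
  · intro h
    exact End.hasEigenvalue_of_hasEigenvector
      ⟨End.mem_eigenspace_iff.2 h, rightEigvec_ne_zero μ⟩

theorem eigenspace_LA {lam : ℝ} (hlam : lam ^ 3 - lam ^ 2 - 1 = 0) :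
    End.eigenspace LA lam = span ℝ {rightEigvec lam} := by
  apply le_antisymm
  · intro v hv
    rw [End.mem_eigenspace_iff] at hv
    rw [eq_smul_rightEigvec_of_LA_eq_smul hv]
    exact smul_mem _ _ (mem_span_singleton_self _)
  · rw [span_singleton_le_iff_mem, End.mem_eigenspace_iff]
    exact (LA_rightEigvec_eq_smul_iff lam).2 hlam

theorem leftEigvec_dotProduct_LA {lam : ℝ} (hlam : lam ^ 3 - lam ^ 2 - 1 = 0)
    (x : Fin 3 → ℝ) :
    leftEigvec lam ⬝ᵥ LA x = lam * (leftEigvec lam ⬝ᵥ x) := by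
  simp only [leftEigvec, LA_apply, dotProduct, Fin.sum_univ_three,
    Matrix.cons_val_zero, Matrix.cons_val_one, Matrix.cons_val]
  linear_combination (- x 0) * hlam

theorem rightEigvec_notMem_range {lam : ℝ} (hlam : lam ^ 3 - lam ^ 2 - 1 = 0) :
    rightEigvec lam ∉ range (LA - lam • 1) := by
  rintro ⟨x, hx⟩
  have hpairing : leftEigvec lam ⬝ᵥ rightEigvec lam = 0 := by
    rw [← hx, LinearMap.sub_apply, dotProduct_sub, leftEigvec_dotProduct_LA hlam]
    simp [dotProduct_smul]
  have hlam1 := one_lt_of_cubic_eq_zero hlam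
  simp only [leftEigvec, rightEigvec, dotProduct, Fin.sum_univ_three,
    Matrix.cons_val_zero, Matrix.cons_val_one, Matrix.cons_val] at hpairing
  nlinarith

theorem finrank_range_LA_sub {lam : ℝ} (hlam : lam ^ 3 - lam ^ 2 - 1 = 0) :
    finrank ℝ (range (LA - lam • 1)) = 2 := by
  have hker : finrank ℝ (ker (LA - lam • 1)) = 1 := by
    rw [← End.eigenspace_def, eigenspace_LA hlam,
      finrank_span_singleton (rightEigvec_ne_zero lam)]
  have := finrank_range_add_finrank_ker (LA - lam • 1)
  rw [hker, finrank_fin_fun] at this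
  omega

/-- `A : ℝ³ → ℝ³` has exactly one real eigenvalue, namely the unique real root `λ` of
`X³ − X² − 1` (which satisfies `λ > 1`); moreover every one-dimensional `A`-invariant
subspace `L` of `ℝ³` is contained in the eigenspace of `λ`. In particular, a
two-dimensional `A`-invariant (stable) subspace contains no `A`-invariant line. -/
theorem anosov_unique_real_eigenvalue (lam : ℝ) (hlam : lam ^ 3 - lam ^ 2 - 1 = 0) :
    Module.End.HasEigenvalue LA lam ∧
    1 < lam ∧
    (∀ μ : ℝ, Module.End.HasEigenvalue LA μ → μ = lam) ∧
    (∀ L : Submodule ℝ (Fin 3 → ℝ), Module.finrank ℝ L = 1 → L.map LA = L →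
      L ≤ Module.End.eigenspace LA lam) ∧
    (∀ Es : Submodule ℝ (Fin 3 → ℝ), Module.finrank ℝ Es = 2 → Es.map LA = Es →
      ∀ L : Submodule ℝ (Fin 3 → ℝ), Module.finrank ℝ L = 1 → L.map LA = L → ¬ L ≤ Es) := by
  have huniq : ∀ μ : ℝ, End.HasEigenvalue LA μ → μ = lam := fun μ hμ =>
    eq_of_cubic_eq_zero hlam (hasEigenvalue_LA_iff.1 hμ)
  have hline : ∀ L : Submodule ℝ (Fin 3 → ℝ), finrank ℝ L = 1 → L.map LA = L →
      L ≤ End.eigenspace LA lam := by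
    intro L hL hLA
    obtain ⟨c, hc, hLc⟩ := L.exists_hasEigenvalue_le_eigenspace_of_finrank_eq_one hL hLA.le
    rwa [huniq c hc] at hLc
  refine ⟨hasEigenvalue_LA_iff.2 hlam, one_lt_of_cubic_eq_zero hlam, huniq, hline, ?_⟩
  intro Es hEs hEsA L hL hLA hLEs
  obtain ⟨c, hc, hrange⟩ := Es.exists_hasEigenvalue_range_sub_le_of_finrank_add_one
    (by rw [hEs, finrank_fin_fun]) hEsA.le
  rw [huniq c hc] at hrange
  have hEs_eq : range (LA - lam • 1) = Es :=
    eq_of_le_of_finrank_le hrange (by rw [finrank_range_LA_sub hlam, hEs])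
  have hL_eq : L = span ℝ {rightEigvec lam} :=
    eq_of_le_of_finrank_le ((hline L hL hLA).trans (eigenspace_LA hlam).le)
      (by rw [finrank_span_singleton (rightEigvec_ne_zero lam), hL])
  apply rightEigvec_notMem_range hlam
  rw [hEs_eq]
  exact hLEs (hL_eq ▸ mem_span_singleton_self _)
end

section
/- Let λ > 1 and t ∈ ℝ. Suppose that for every δ > 0 there exist n ∈ ℕ and real numbers z₀, z₁, …, z_n with z₀ = t, z_n = 0, and |z_{i+1} − λ·z_i| ≤ δ for all 0 ≤ i < n. Then t = 0. -/
/-!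
A homothety of ratio `λ > 1` pushes every point of norm at least `r` out to norm at least `λ r`,
so an error of at most `(λ - 1) r` per step cannot bring it back inside the ball of radius `r`.
Hence a pseudo-orbit with that precision starting at `t ≠ 0` (take `r = |t|`) never reaches `0`.
-/

variable {𝕜 E : Type*} [NormedField 𝕜] [SeminormedAddCommGroup E] [NormedSpace 𝕜 E]

def IsPseudoOrbit {X : Type*} [PseudoMetricSpace X] (f : X → X) (δ : ℝ) (n : ℕ) (z : ℕ → X) :
    Prop :=
  ∀ i < n, dist (z (i + 1)) (f (z i)) ≤ δ

theorem le_norm_of_norm_sub_smul_le {c : 𝕜} {r : ℝ} {x y : E} (hx : r ≤ ‖x‖)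
    (hxy : ‖y - c • x‖ ≤ (‖c‖ - 1) * r) : r ≤ ‖y‖ :=
  calc r = ‖c‖ * r - (‖c‖ - 1) * r := by ring
    _ ≤ ‖c • x‖ - ‖y - c • x‖ := by
      rw [norm_smul]; gcongr
    _ ≤ ‖y‖ := by
      have := norm_sub_norm_le (c • x) (c • x - y)
      rwa [sub_sub_cancel, norm_sub_rev] at this

theorem IsPseudoOrbit.le_norm_of_smul {c : 𝕜} {r : ℝ} {n : ℕ} {z : ℕ → E}
    (hz : IsPseudoOrbit (c • ·) ((‖c‖ - 1) * r) n z) (h0 : r ≤ ‖z 0‖) : r ≤ ‖z n‖ := by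
  induction n with
  | zero => exact h0
  | succ n ih =>
    refine le_norm_of_norm_sub_smul_le (c := c) (ih fun i hi => hz i (by omega)) ?_
    rw [← dist_eq_norm]
    exact hz n n.lt_succ_self

/-- Let `λ > 1` and `t ∈ ℝ`. If for every `δ > 0` there is a `δ`-pseudo-orbit of the
homothety `x ↦ λx` joining `t` to `0` (i.e. reals `z₀, …, z_n` with `z₀ = t`, `z_n = 0`
and `|z_{i+1} − λ·z_i| ≤ δ` for all `i < n`), then `t = 0`. -/
theorem fixed_point_of_small_pseudo_orbits (lam t : ℝ) (hlam : 1 < lam)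
    (h : ∀ δ : ℝ, 0 < δ → ∃ (n : ℕ) (z : ℕ → ℝ), z 0 = t ∧ z n = 0 ∧
      ∀ i < n, |z (i + 1) - lam * z i| ≤ δ) :
    t = 0 := by
  by_contra ht
  obtain ⟨n, z, hz0, hzn, hz⟩ := h ((lam - 1) * |t|) (mul_pos (sub_pos.2 hlam) (abs_pos.2 ht))
  have hlam_norm : ‖lam‖ = lam := Real.norm_of_nonneg (by linarith)
  have hpseudo : IsPseudoOrbit (lam • ·) ((‖lam‖ - 1) * |t|) n z := by
    simpa only [IsPseudoOrbit, Real.dist_eq, smul_eq_mul, hlam_norm] using hz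
  have hzn_norm := hpseudo.le_norm_of_smul (by rw [hz0, Real.norm_eq_abs])
  simp [hzn, ht] at hzn_norm
end

section
/- Let X be a compact metric space, μ a finite Borel measure on X, and U ⊆ X an open set. For a continuous map f : X → X define U⁺(f) = {x ∈ X : f^[n](x) ∈ closure(U) for every n ≥ 0}. Let ε > 0 and let g : X → X be continuous with μ(U⁺(g)) < ε. Then there exists η > 0 such that every continuous map f : X → X satisfying d(f(x), g(x)) < η for all x ∈ X also satisfies μ(U⁺(f)) < ε. -/
/-!
Write `S = closure U`. The set `U⁺(g) = ⋂ₙ g⁻ⁿ S` is the intersection of the decreasing closed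
sets `K_N(g)` (`iterateNearSet`) of points whose iterates up to time `N` stay `1/(N+1)`-close
to `S`, so by continuity of `μ` from above some `K_N(g)` already has measure `< ε`. Since `g` is
uniformly continuous on the compact space `X`, the iterates up to time `N` of every `f` uniformly
close enough to `g` are `1/(N+1)`-close to those of `g`, which puts `U⁺(f)` inside `K_N(g)`.
-/

open MeasureTheory Filter Topology Metric Set

section Iterates

variable {X : Type*} [PseudoMetricSpace X] {g : X → X}

theorem UniformContinuous.eventually_dist_iterate_lt (hg : UniformContinuous g) (n : ℕ)
    {δ : ℝ} (hδ : 0 < δ) :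
    ∀ᶠ η in 𝓝[>] (0 : ℝ), ∀ f : X → X, (∀ x, dist (f x) (g x) < η) →
      ∀ x, dist (f^[n] x) (g^[n] x) < δ := by
  induction n generalizing δ with
  | zero => exact Eventually.of_forall fun _ _ _ _ => by simpa using hδ
  | succ n ih =>
    obtain ⟨δ', hδ', hgδ'⟩ := Metric.uniformContinuous_iff.1 hg (δ / 2) (half_pos hδ)
    filter_upwards [ih hδ', Ioo_mem_nhdsGT (half_pos hδ)] with η hη hηδ f hf x
    rw [Function.iterate_succ_apply', Function.iterate_succ_apply']
    calc dist (f (f^[n] x)) (g (g^[n] x))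
        ≤ dist (f (f^[n] x)) (g (f^[n] x)) + dist (g (f^[n] x)) (g (g^[n] x)) :=
          dist_triangle _ _ _
      _ < δ / 2 + δ / 2 := add_lt_add ((hf _).trans hηδ.2) (hgδ' (hη f hf x))
      _ = δ := add_halves δ

theorem UniformContinuous.exists_pos_forall_dist_iterate_lt (hg : UniformContinuous g) (N : ℕ)
    {δ : ℝ} (hδ : 0 < δ) :
    ∃ η > 0, ∀ f : X → X, (∀ x, dist (f x) (g x) < η) →
      ∀ x, ∀ n ≤ N, dist (f^[n] x) (g^[n] x) < δ := by
  have hall := (finite_Iic N).eventually_all.2 fun n _ => hg.eventually_dist_iterate_lt n hδ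
  obtain ⟨η, hη, hpos⟩ := (hall.and self_mem_nhdsWithin).exists
  exact ⟨η, hpos, fun f hf x n hn => hη n hn f hf x⟩

def iterateNearSet (g : X → X) (S : Set X) (N : ℕ) : Set X :=
  ⋂ n ∈ Iic N, g^[n] ⁻¹' cthickening (1 / (N + 1)) S

theorem isClosed_iterateNearSet (hg : Continuous g) (S : Set X) (N : ℕ) :
    IsClosed (iterateNearSet g S N) :=
  isClosed_biInter fun n _ => isClosed_cthickening.preimage (hg.iterate n)

theorem antitone_iterateNearSet (g : X → X) (S : Set X) : Antitone (iterateNearSet g S) := by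
  intro N M hNM x hx
  simp only [iterateNearSet, mem_iInter₂, mem_preimage, mem_Iic] at hx ⊢
  intro n hn
  refine cthickening_mono ?_ S (hx n (hn.trans hNM))
  gcongr

theorem iInter_iterateNearSet {S : Set X} (hS : IsClosed S) :
    ⋂ N, iterateNearSet g S N = ⋂ n, g^[n] ⁻¹' S := by
  refine Subset.antisymm ?_ ?_
  · refine subset_iInter fun n x hx => ?_
    rw [mem_preimage, ← hS.closure_eq, closure_eq_iInter_cthickening]
    refine mem_iInter₂.2 fun δ hδ => ?_
    obtain ⟨M, hM⟩ := exists_nat_one_div_lt hδ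
    have hx' := mem_iInter₂.1 (mem_iInter.1 hx (max M n)) n (le_max_right M n)
    refine cthickening_mono ?_ S hx'
    calc 1 / ((max M n : ℕ) + 1 : ℝ) ≤ 1 / (M + 1) := by gcongr; exact le_max_left M n
      _ ≤ δ := hM.le
  · exact subset_iInter fun N x hx =>
      mem_iInter₂.2 fun n _ => self_subset_cthickening S (mem_iInter.1 hx n)

end Iterates

theorem measure_of_forward_invariant_set_semicontinuous_general
    {X : Type*} [MetricSpace X] [CompactSpace X] [MeasurableSpace X] [BorelSpace X]
    (μ : Measure X) [IsFiniteMeasure μ] (U : Set X)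
    (ε : ENNReal) (g : X → X) (hg : Continuous g)
    (hμg : μ {x : X | ∀ n : ℕ, g^[n] x ∈ closure U} < ε) :
    ∃ η : ℝ, 0 < η ∧ ∀ f : X → X, Continuous f → (∀ x : X, dist (f x) (g x) < η) →
      μ {x : X | ∀ n : ℕ, f^[n] x ∈ closure U} < ε := by
  have hinv : {x : X | ∀ n : ℕ, g^[n] x ∈ closure U} = ⋂ N, iterateNearSet g (closure U) N := by
    rw [iInter_iterateNearSet isClosed_closure]
    ext x
    simp
  rw [hinv] at hμg
  obtain ⟨N, hN⟩ := ((tendsto_measure_iInter_atTop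
    (fun N => (isClosed_iterateNearSet hg _ N).nullMeasurableSet)
    (antitone_iterateNearSet g _) ⟨0, measure_ne_top μ _⟩).eventually_lt_const hμg).exists
  obtain ⟨η, hη, hclose⟩ := (CompactSpace.uniformContinuous_of_continuous hg)
    |>.exists_pos_forall_dist_iterate_lt N (δ := 1 / (N + 1)) (by positivity)
  refine ⟨η, hη, fun f _ hf => (measure_mono fun x hx => ?_).trans_lt hN⟩
  refine mem_iInter₂.2 fun n hn => mem_cthickening_of_dist_le _ (f^[n] x) _ _ (hx n) ?_
  rw [dist_comm]
  exact (hclose f hf x n hn).le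

/-- Let `X` be a compact metric space, `μ` a finite Borel measure on `X`, `U ⊆ X` open.
For `f : X → X` let `U⁺(f) = {x : f^[n](x) ∈ closure U for all n ≥ 0}`. If `g` is
continuous with `μ(U⁺(g)) < ε`, then there is `η > 0` such that every continuous `f`
with `d(f(x), g(x)) < η` for all `x` also satisfies `μ(U⁺(f)) < ε`: the measure of the
maximal forward-invariant set in `closure U` is upper semicontinuous in the `C⁰`
topology. -/
theorem measure_of_forward_invariant_set_semicontinuous
    {X : Type*} [MetricSpace X] [CompactSpace X] [MeasurableSpace X] [BorelSpace X]
    (μ : Measure X) [IsFiniteMeasure μ] (U : Set X) (hU : IsOpen U)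
    (ε : ENNReal) (hε : 0 < ε) (g : X → X) (hg : Continuous g)
    (hμg : μ {x : X | ∀ n : ℕ, g^[n] x ∈ closure U} < ε) :
    ∃ η : ℝ, 0 < η ∧ ∀ f : X → X, Continuous f → (∀ x : X, dist (f x) (g x) < η) →
      μ {x : X | ∀ n : ℕ, f^[n] x ∈ closure U} < ε :=
  measure_of_forward_invariant_set_semicontinuous_general μ U ε g hg hμg
end
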